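/- Let n ≥ 3 and let S_n be the star graph on vertices {0,1,...,n−1} with center 0. Then PEnd(S_n) = PsEnd(S_n) ∪ {α ∈ PT({0,...,n−1}) : 0 ∉ dom(α), 0 ∈ im(α) and im(α) ∩ {1,...,n−1} ≠ ∅}. -/
import Mathlib


variable {V : Type*}

/-- Partial transformations of `V`. -/
abbrev PTrans (V : Type*) := V → Option V

/-- Monoid of partial transformations under (left-to-right) composition. -/
instance : Monoid (PTrans V) where
  mul f g := fun v => (f v).bind g
  one := fun v => some v
  mul_assoc f g h := by
    funext v
    show ((f v).bind g).bind h = (f v).bind (fun x => (g x).bind h)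
    cases f v <;> simp
  one_mul f := by funext v; rfl
  mul_one f := by
    funext v
    show (f v).bind (fun x => some x) = f v
    cases f v <;> simp

/-- Domain of a partial transformation. -/
def pdom (α : PTrans V) : Set V := {u | α u ≠ none}

/-- Image of a partial transformation. -/
def pim (α : PTrans V) : Set V := {v | ∃ u, α u = some v}

def IsPEnd (G : SimpleGraph V) (α : PTrans V) : Prop :=
  ∀ u v u' v', α u = some u' → α v = some v' → G.Adj u v → G.Adj u' v'

def IsPwEnd (G : SimpleGraph V) (α : PTrans V) : Prop :=
  ∀ u v u' v', α u = some u' → α v = some v' → G.Adj u v → u' ≠ v' → G.Adj u' v'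

def IsPsEnd (G : SimpleGraph V) (α : PTrans V) : Prop :=
  ∀ u v u' v', α u = some u' → α v = some v' → (G.Adj u v ↔ G.Adj u' v')

def IsPswEnd (G : SimpleGraph V) (α : PTrans V) : Prop :=
  ∀ u v u' v', α u = some u' → α v = some v' → ((G.Adj u v ∧ u' ≠ v') ↔ G.Adj u' v')

/-- Injectivity of a partial transformation. -/
def PInjective (α : PTrans V) : Prop :=
  ∀ u v w, α u = some w → α v = some w → u = v

open Classical in
/-- The inverse of a partial (injective) transformation. -/
noncomputable def pinv (α : PTrans V) : PTrans V :=
  fun v => if h : ∃ u, α u = some v then some h.choose else none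

/-- Partial automorphism: injective, and both it and its inverse are
partial endomorphisms. -/
def IsPAut (G : SimpleGraph V) (α : PTrans V) : Prop :=
  PInjective α ∧ IsPEnd G α ∧ IsPEnd G (pinv α)

/-- The star graph on vertices `{0,1,...,n-1}` with center `0`. -/
def starGraph (n : ℕ) : SimpleGraph (Fin n) :=
  SimpleGraph.fromRel (fun u _ => (u : ℕ) = 0)

theorem stmt14 (n : ℕ) (hn : 3 ≤ n) :
    {α : PTrans (Fin n) | IsPEnd (starGraph n) α} =
      {α : PTrans (Fin n) | IsPsEnd (starGraph n) α} ∪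
      {α : PTrans (Fin n) | (⟨0, by omega⟩ : Fin n) ∉ pdom α ∧
        (⟨0, by omega⟩ : Fin n) ∈ pim α ∧ ∃ j ∈ pim α, j ≠ ⟨0, by omega⟩} := by
  have hadj : ∀ u v : Fin n, (starGraph n).Adj u v ↔ u ≠ v ∧ ((u : ℕ) = 0 ∨ (v : ℕ) = 0) := by
    intro u v
    simp [starGraph, SimpleGraph.fromRel_adj]
  ext α
  simp only [Set.mem_setOf_eq, Set.mem_union]
  constructor
  · intro h
    rcases h0 : α ⟨0, by omega⟩ with _ | c
    · by_cases hps : IsPsEnd (starGraph n) α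
      · exact Or.inl hps
      · right
        refine ⟨by simp [pdom, h0], ?_⟩
        simp only [IsPsEnd, not_forall] at hps
        obtain ⟨u, v, u', v', hu, hv, hiff⟩ := hps
        have hmp : (starGraph n).Adj u v → (starGraph n).Adj u' v' := h u v u' v' hu hv
        have hadj' : (starGraph n).Adj u' v' := by tauto
        rw [hadj] at hadj'
        obtain ⟨hne, hz⟩ := hadj'
        rcases hz with h1 | h1
        · have heq : u' = ⟨0, by omega⟩ := Fin.ext h1
          exact ⟨⟨u, by rw [hu, heq]⟩, v', ⟨v, hv⟩, fun e => hne (heq.trans e.symm)⟩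
        · have heq : v' = ⟨0, by omega⟩ := Fin.ext h1
          exact ⟨⟨v, by rw [hv, heq]⟩, u', ⟨u, hu⟩, fun e => hne (e.trans heq.symm)⟩
    · left
      intro u v u' v' hu hv
      refine ⟨h u v u' v' hu hv, ?_⟩
      intro hadj'
      rw [hadj] at hadj' ⊢
      obtain ⟨hne', hzz⟩ := hadj'
      have hne : u ≠ v := by
        rintro rfl
        rw [hu] at hv
        exact hne' (Option.some_injective _ hv)
      refine ⟨hne, ?_⟩
      by_contra hcon
      push_neg at hcon
      obtain ⟨hu0, hv0⟩ := hcon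
      have hau : (starGraph n).Adj ⟨0, by omega⟩ u := by
        rw [hadj]
        exact ⟨fun e => hu0 (by rw [← e]), Or.inl rfl⟩
      have hav : (starGraph n).Adj ⟨0, by omega⟩ v := by
        rw [hadj]
        exact ⟨fun e => hv0 (by rw [← e]), Or.inl rfl⟩
      have hcu : (starGraph n).Adj c u' := h _ u c u' h0 hu hau
      have hcv : (starGraph n).Adj c v' := h _ v c v' h0 hv hav
      rw [hadj] at hcu hcv
      have e1 : (c : ℕ) ≠ (u' : ℕ) := fun e => hcu.1 (Fin.ext e)
      have e2 : (c : ℕ) ≠ (v' : ℕ) := fun e => hcv.1 (Fin.ext e)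
      have e3 : (u' : ℕ) ≠ (v' : ℕ) := fun e => hne' (Fin.ext e)
      rcases hcu.2 with h1 | h1 <;> rcases hcv.2 with h2 | h2 <;> omega
  · rintro (hps | ⟨h0, -, -⟩)
    · exact fun u v u' v' hu hv huv => (hps u v u' v' hu hv).mp huv
    · intro u v u' v' hu hv huv
      rw [hadj] at huv
      have hz0 : α ⟨0, by omega⟩ = none := not_not.mp h0
      rcases huv.2 with h1 | h1
      · have heq : u = ⟨0, by omega⟩ := Fin.ext h1
        rw [heq, hz0] at hu
        exact absurd hu (by simp)
      · have heq : v = ⟨0, by omega⟩ := Fin.ext h1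
        rw [heq, hz0] at hv
        exact absurd hv (by simp)
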